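/- arXiv:2006.11518 — 3 statements merged into one kernel-verified Lean document; each statement's English description precedes it below -/
import Mathlib

section
/- For every continuously differentiable functions v : ℝⁿ → ℂ and G : ℝⁿ → ℝ and every real T ≥ 0, the function w(x) := exp(−i(T·|v(x)|² + G(x)))·v(x) satisfies the lower bound ‖∇w‖_{L²(K)} ≥ (2T/3)·‖∇(|v|³)‖_{L²(K)} − |v|_∞·‖∇G‖_{L²(K)} − ‖∇v‖_{L²(K)}, where for a (vector of) function(s) f, ‖f‖_{L²(K)} = (∫_K |f(x)|² π^{−n}dx)^{1/2} and |∇w(x)|² = Σ_{j=1}^n |∂_j w(x)|². -/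
/-!
With `φ = T|v|² + G`, the chain rule gives `∂ⱼw = e^{-iφ} (∂ⱼv - i (T ∂ⱼ|v|² + ∂ⱼG) v)`, and the
phase has modulus one. Since `t ↦ t^{3/2}` is `C¹`, `∂ⱼ|v|³ = (3/2) |v| ∂ⱼ|v|²`, so the vector
`(2T/3) ∇|v|³` has the length of `i T v ∇|v|² = ∇v - e^{iφ} ∇w - i v ∇G`. Hence pointwise on `K`
`|(2T/3) ∇|v|³| ≤ |∇w| + |v|_∞ |∇G| + |∇v|`, and Minkowski's inequality in `L²(K)` concludes.
-/

open MeasureTheory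

noncomputable section

/-- The cube `K = [0, π]ⁿ ⊂ ℝⁿ`. -/
def cubeK (n : ℕ) : Set (Fin n → ℝ) := Set.Icc 0 (fun _ => Real.pi)

/-- The `L²(K)`-norm of the gradient of `f`, with respect to the normalized
measure `π^{-n} dx`: `‖∇f‖_{L²(K)} = (∫_K Σ_j |∂_j f(x)|² π^{-n} dx)^{1/2}`. -/
def gradL2 {F : Type*} [NormedAddCommGroup F] [NormedSpace ℝ F]
    (n : ℕ) (f : (Fin n → ℝ) → F) : ℝ :=
  Real.sqrt ((Real.pi ^ n)⁻¹ *
    ∫ x in cubeK n, ∑ j : Fin n, ‖fderiv ℝ f x (Pi.single j 1)‖ ^ 2)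

/-- The sup-norm `|f|_∞ = sup_{x ∈ K} |f(x)|`. -/
def supNormK {F : Type*} [NormedAddCommGroup F] (n : ℕ) (f : (Fin n → ℝ) → F) : ℝ :=
  ⨆ x : cubeK n, ‖f (x : Fin n → ℝ)‖

open ENNReal

theorem toReal_eLpNorm_le_add_add {α E F₁ F₂ F₃ : Type*} [MeasurableSpace α] {μ : Measure α}
    [NormedAddCommGroup E] [NormedAddCommGroup F₁] [NormedAddCommGroup F₂] [NormedAddCommGroup F₃]
    {p : ℝ≥0∞} (hp : 1 ≤ p) {f : α → E} {g : α → F₁} {h : α → F₂} {k : α → F₃}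
    (hg : MemLp g p μ) (hh : MemLp h p μ) (hk : MemLp k p μ)
    (hle : ∀ᵐ x ∂μ, ‖f x‖ ≤ ‖g x‖ + ‖h x‖ + ‖k x‖) :
    (eLpNorm f p μ).toReal ≤
      (eLpNorm g p μ).toReal + (eLpNorm h p μ).toReal + (eLpNorm k p μ).toReal := by
  have hsum : eLpNorm f p μ ≤ eLpNorm g p μ + eLpNorm h p μ + eLpNorm k p μ :=
    calc eLpNorm f p μ ≤ eLpNorm (fun x => ‖g x‖ + ‖h x‖ + ‖k x‖) p μ := eLpNorm_mono_ae_real hle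
      _ ≤ eLpNorm (fun x => ‖g x‖) p μ + eLpNorm (fun x => ‖h x‖) p μ
            + eLpNorm (fun x => ‖k x‖) p μ :=
        (eLpNorm_add_le (hg.norm.add hh.norm).1 hk.norm.1 hp).trans
          (add_le_add_left (eLpNorm_add_le hg.norm.1 hh.norm.1 hp) _)
      _ = eLpNorm g p μ + eLpNorm h p μ + eLpNorm k p μ := by simp only [eLpNorm_norm]
  rw [← toReal_add hg.2.ne hh.2.ne, ← toReal_add (add_lt_top.2 ⟨hg.2, hh.2⟩).ne hk.2.ne]
  exact toReal_mono (add_lt_top.2 ⟨add_lt_top.2 ⟨hg.2, hh.2⟩, hk.2⟩).ne hsum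

open Complex in
theorem norm_toLp_ofReal_mul {ι : Type*} [Fintype ι] (u : PiLp 2 (fun _ : ι => ℝ)) (z : ℂ) :
    ‖WithLp.toLp 2 (fun j => (u j : ℂ) * z)‖ = ‖u‖ * ‖z‖ := by
  simp only [PiLp.norm_eq_of_L2, norm_mul, norm_real, mul_pow, ← Finset.sum_mul]
  rw [Real.sqrt_mul (Finset.sum_nonneg fun _ _ => sq_nonneg _), Real.sqrt_sq (norm_nonneg z)]

open Complex in
/-- At a point where `v = z`, the vectors `dv`, `dw`, `dp`, `dg` stand for the gradients of `v`, `w`,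
`|v|²`, `G`, and `hw` is the chain rule for `w = e^{-i(T|v|² + G)} v`. -/
theorem abs_mul_norm_mul_norm_le {ι : Type*} [Fintype ι] (dv dw : PiLp 2 (fun _ : ι => ℂ))
    (dp dg : PiLp 2 (fun _ : ι => ℝ)) (z : ℂ) (T : ℝ)
    (hw : ∀ j, ‖dw j‖ = ‖dv j - I * (T * dp j + dg j) * z‖) :
    |T| * ‖z‖ * ‖dp‖ ≤ ‖dw‖ + ‖z‖ * ‖dg‖ + ‖dv‖ := by
  set D : PiLp 2 (fun _ : ι => ℂ) := WithLp.toLp 2 fun j => dv j - I * (T * dp j + dg j) * z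
  set P : PiLp 2 (fun _ : ι => ℂ) := WithLp.toLp 2 fun j => (dp j : ℂ) * z
  set Q : PiLp 2 (fun _ : ι => ℂ) := WithLp.toLp 2 fun j => (dg j : ℂ) * z
  have hD : ‖D‖ = ‖dw‖ := by simp only [D, PiLp.norm_eq_of_L2, hw]
  have hsplit : (I * T) • P = dv - D - I • Q := by
    ext j
    simp only [D, P, Q, PiLp.smul_apply, PiLp.sub_apply, smul_eq_mul]
    ring
  calc |T| * ‖z‖ * ‖dp‖ = ‖(I * T) • P‖ := by
        rw [norm_smul, norm_toLp_ofReal_mul, norm_mul, norm_I, norm_real, Real.norm_eq_abs]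
        ring
    _ = ‖dv - D - I • Q‖ := by rw [hsplit]
    _ ≤ ‖dv‖ + ‖D‖ + ‖I • Q‖ := (norm_sub_le _ _).trans (add_le_add_left (norm_sub_le _ _) _)
    _ = ‖dw‖ + ‖z‖ * ‖dg‖ + ‖dv‖ := by
        rw [hD, norm_smul, norm_I, one_mul, norm_toLp_ofReal_mul]
        ring

open Complex in
theorem fderiv_cexp_neg_I_mul_ofReal_mul {E : Type*} [NormedAddCommGroup E] [NormedSpace ℝ E]
    {φ : E → ℝ} {v : E → ℂ} {x : E} (hφ : DifferentiableAt ℝ φ x)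
    (hv : DifferentiableAt ℝ v x) (u : E) :
    fderiv ℝ (fun y => exp (-I * (φ y : ℂ)) * v y) x u =
      exp (-I * (φ x : ℂ)) * (fderiv ℝ v x u - I * fderiv ℝ φ x u * v x) := by
  have hphase := ((ofRealCLM.hasFDerivAt.comp x hφ.hasFDerivAt).const_mul (-I)).cexp
  have hw : HasFDerivAt (fun y => exp (-I * (φ y : ℂ)) * v y) _ x := hphase.mul hv.hasFDerivAt
  rw [hw.fderiv]
  simp only [Function.comp_apply, ofRealCLM_apply, add_apply, smul_apply, smul_eq_mul,
    ContinuousLinearMap.comp_apply]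
  ring

theorem hasFDerivAt_norm_pow_three {E F : Type*} [NormedAddCommGroup E] [NormedSpace ℝ E]
    [NormedAddCommGroup F] [InnerProductSpace ℝ F] {v : E → F} {x : E}
    (hv : DifferentiableAt ℝ v x) :
    HasFDerivAt (fun y => ‖v y‖ ^ 3) ((3 / 2 * ‖v x‖) • fderiv ℝ (fun y => ‖v y‖ ^ 2) x) x := by
  have hpow : HasDerivAt (fun t : ℝ => t ^ (3 / 2 : ℝ))
      (3 / 2 * (‖v x‖ ^ 2) ^ (3 / 2 - 1 : ℝ)) (‖v x‖ ^ 2) :=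
    Real.hasDerivAt_rpow_const (Or.inr (by norm_num))
  have hsq : ∀ r : ℝ, 0 ≤ r → (r ^ 2) ^ (3 / 2 : ℝ) = r ^ 3 ∧ (r ^ 2) ^ (3 / 2 - 1 : ℝ) = r :=
    fun r hr => by
      simp only [← Real.rpow_natCast r 2, ← Real.rpow_mul hr]
      norm_num
  have h := hpow.comp_hasFDerivAt x (hv.norm_sq ℝ).hasFDerivAt
  simp only [Function.comp_def, (hsq _ (norm_nonneg _)).1, (hsq _ (norm_nonneg _)).2] at h
  exact h

theorem ContDiff.norm_pow_three {E F : Type*} [NormedAddCommGroup E] [NormedSpace ℝ E]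
    [NormedAddCommGroup F] [InnerProductSpace ℝ F] {v : E → F} (hv : ContDiff ℝ 1 v) :
    ContDiff ℝ 1 (fun y => ‖v y‖ ^ 3) := by
  have hderiv := fun x => hasFDerivAt_norm_pow_three (hv.differentiable one_ne_zero x)
  rw [contDiff_one_iff_fderiv, funext fun x => (hderiv x).fderiv]
  exact ⟨fun x => (hderiv x).differentiableAt, (continuous_const.mul hv.continuous.norm).smul
    ((hv.norm_sq ℝ).continuous_fderiv one_ne_zero)⟩

def grad {F : Type*} [NormedAddCommGroup F] [NormedSpace ℝ F] {n : ℕ}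
    (f : (Fin n → ℝ) → F) (x : Fin n → ℝ) : PiLp 2 (fun _ : Fin n => F) :=
  WithLp.toLp 2 fun j => fderiv ℝ f x (Pi.single j 1)

def cubeMeasure (n : ℕ) : Measure (Fin n → ℝ) :=
  ENNReal.ofReal (Real.pi ^ n)⁻¹ • volume.restrict (cubeK n)

section
variable {n : ℕ} {E F : Type*} [NormedAddCommGroup E] [NormedAddCommGroup F] [NormedSpace ℝ F]

theorem Continuous.memLp_cubeMeasure {f : (Fin n → ℝ) → E} (hf : Continuous f) (p : ℝ≥0∞) :
    MemLp f p (cubeMeasure n) := by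
  have hK : IsCompact (cubeK n) := isCompact_Icc
  have : IsFiniteMeasure (volume.restrict (cubeK n)) :=
    isFiniteMeasure_restrict.2 hK.measure_lt_top.ne
  obtain ⟨C, hC⟩ := hK.exists_bound_of_continuousOn hf.continuousOn
  exact (MemLp.of_bound hf.aestronglyMeasurable C
    ((ae_restrict_iff' hK.measurableSet).2 (.of_forall hC))).smul_measure ofReal_ne_top

theorem ContDiff.continuous_grad {f : (Fin n → ℝ) → F} (hf : ContDiff ℝ 1 f) :
    Continuous (grad f) :=
  (PiLp.continuous_toLp 2 _).comp
    (continuous_pi fun _ => (hf.continuous_fderiv one_ne_zero).clm_apply continuous_const)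

theorem gradL2_eq_toReal_eLpNorm {f : (Fin n → ℝ) → F} (hf : ContDiff ℝ 1 f) :
    gradL2 n f = (eLpNorm (grad f) 2 (cubeMeasure n)).toReal := by
  rw [(hf.continuous_grad.memLp_cubeMeasure 2).eLpNorm_eq_integral_rpow_norm two_ne_zero
    ofNat_ne_top, toReal_ofReal (by positivity), cubeMeasure, integral_smul_measure,
    toReal_ofReal (by positivity), gradL2, Real.sqrt_eq_rpow]
  simp [grad, PiLp.norm_sq_eq_of_L2]

theorem norm_le_supNormK {f : (Fin n → ℝ) → E} (hf : Continuous f) {x : Fin n → ℝ}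
    (hx : x ∈ cubeK n) : ‖f x‖ ≤ supNormK n f := by
  refine le_ciSup (f := fun y : cubeK n => ‖f y‖) ?_ ⟨x, hx⟩
  have hbdd := (isCompact_Icc (a := 0) (b := fun _ : Fin n => Real.pi)).bddAbove_image
    hf.norm.continuousOn
  rwa [Set.image_eq_range] at hbdd

theorem ae_cubeMeasure_of_forall_mem {p : (Fin n → ℝ) → Prop} (h : ∀ x ∈ cubeK n, p x) :
    ∀ᵐ x ∂cubeMeasure n, p x :=
  Measure.ae_smul_measure ((ae_restrict_iff' measurableSet_Icc).2 (.of_forall h)) _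

end

open Complex in
theorem norm_smul_grad_norm_pow_three_le {n : ℕ} {v : (Fin n → ℝ) → ℂ}
    {G : (Fin n → ℝ) → ℝ} (hv : Differentiable ℝ v) (hG : Differentiable ℝ G) (T : ℝ)
    (x : Fin n → ℝ) :
    ‖(2 * T / 3) • grad (fun y => ‖v y‖ ^ 3) x‖ ≤
      ‖grad (fun y => exp (-I * ((T * ‖v y‖ ^ 2 + G y : ℝ) : ℂ)) * v y) x‖
        + ‖v x‖ * ‖grad G x‖ + ‖grad v x‖ := by
  have hN : Differentiable ℝ (fun y => ‖v y‖ ^ 2) := fun y => (hv y).norm_sq ℝ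
  have hcube : grad (fun y => ‖v y‖ ^ 3) x = (3 / 2 * ‖v x‖) • grad (fun y => ‖v y‖ ^ 2) x := by
    ext j
    simp [grad, (hasFDerivAt_norm_pow_three (hv x)).fderiv]
  have hphase : ∀ j, ‖grad (fun y => exp (-I * ((T * ‖v y‖ ^ 2 + G y : ℝ) : ℂ)) * v y) x j‖ =
      ‖grad v x j - I * (T * grad (fun y => ‖v y‖ ^ 2) x j + grad G x j) * v x‖ := by
    intro j
    simp only [grad, PiLp.toLp_apply]
    rw [fderiv_cexp_neg_I_mul_ofReal_mul (φ := fun y => T * ‖v y‖ ^ 2 + G y)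
      (((hN x).const_mul T).add (hG x)) (hv x),
      fderiv_fun_add ((hN x).const_mul T) (hG x), fderiv_const_mul (hN x), norm_mul, neg_mul,
      ← mul_neg, ← ofReal_neg, norm_exp_I_mul_ofReal, one_mul]
    simp
  calc ‖(2 * T / 3) • grad (fun y => ‖v y‖ ^ 3) x‖
      = |T| * ‖v x‖ * ‖grad (fun y => ‖v y‖ ^ 2) x‖ := by
        rw [hcube, smul_smul, norm_smul, Real.norm_eq_abs,
          show 2 * T / 3 * (3 / 2 * ‖v x‖) = T * ‖v x‖ by ring, abs_mul, abs_norm]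
    _ ≤ _ := abs_mul_norm_mul_norm_le _ _ _ _ _ T hphase

theorem stmt0_general (n : ℕ) (v : (Fin n → ℝ) → ℂ) (G : (Fin n → ℝ) → ℝ)
    (hv : ContDiff ℝ 1 v) (hG : ContDiff ℝ 1 G) (T : ℝ) :
    gradL2 n (fun x => Complex.exp (-Complex.I * ((T * ‖v x‖ ^ 2 + G x : ℝ) : ℂ)) * v x) ≥
      (2 * T / 3) * gradL2 n (fun x => ‖v x‖ ^ 3)
        - supNormK n v * gradL2 n G - gradL2 n v := by
  set w := fun x => Complex.exp (-Complex.I * ((T * ‖v x‖ ^ 2 + G x : ℝ) : ℂ)) * v x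
  set S := supNormK n v
  have hw : ContDiff ℝ 1 w :=
    ((contDiff_const.mul (Complex.ofRealCLM.contDiff.comp
      ((contDiff_const.mul (hv.norm_sq ℝ)).add hG))).cexp).mul hv
  have hS : 0 ≤ S := Real.iSup_nonneg fun _ => norm_nonneg _
  have hpointwise : ∀ x ∈ cubeK n, ‖((2 * T / 3) • grad fun y => ‖v y‖ ^ 3) x‖ ≤
      ‖grad w x‖ + ‖(S • grad G) x‖ + ‖grad v x‖ := fun x hx => by
    refine (norm_smul_grad_norm_pow_three_le (hv.differentiable one_ne_zero)
      (hG.differentiable one_ne_zero) T x).trans ?_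
    rw [Pi.smul_apply, norm_smul, Real.norm_of_nonneg hS]
    gcongr
    exact norm_le_supNormK hv.continuous hx
  have hL2 := toReal_eLpNorm_le_add_add one_le_two (hw.continuous_grad.memLp_cubeMeasure 2)
    ((hG.continuous_grad.memLp_cubeMeasure 2).const_smul S)
    (hv.continuous_grad.memLp_cubeMeasure 2) (ae_cubeMeasure_of_forall_mem hpointwise)
  simp only [eLpNorm_const_smul, toReal_mul, toReal_enorm, Real.norm_eq_abs,
    abs_of_nonneg hS] at hL2
  rw [ge_iff_le, gradL2_eq_toReal_eLpNorm hw, gradL2_eq_toReal_eLpNorm hv.norm_pow_three,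
    gradL2_eq_toReal_eLpNorm hG, gradL2_eq_toReal_eLpNorm hv]
  have hcoef := mul_le_mul_of_nonneg_right (le_abs_self (2 * T / 3))
    (toReal_nonneg (a := eLpNorm (grad fun y => ‖v y‖ ^ 3) 2 (cubeMeasure n)))
  linarith

/-- for `v, G` continuously differentiable and `T ≥ 0`, the function
`w(x) = exp(-i(T|v(x)|² + G(x))) v(x)` satisfies
`‖∇w‖_{L²(K)} ≥ (2T/3)‖∇(|v|³)‖_{L²(K)} - |v|_∞ ‖∇G‖_{L²(K)} - ‖∇v‖_{L²(K)}`. -/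
theorem stmt0 (n : ℕ) (hn : 1 ≤ n) (v : (Fin n → ℝ) → ℂ) (G : (Fin n → ℝ) → ℝ)
    (hv : ContDiff ℝ 1 v) (hG : ContDiff ℝ 1 G) (T : ℝ) (hT : 0 ≤ T) :
    gradL2 n (fun x => Complex.exp (-Complex.I * ((T * ‖v x‖ ^ 2 + G x : ℝ) : ℂ)) * v x) ≥
      (2 * T / 3) * gradL2 n (fun x => ‖v x‖ ^ 3)
        - supNormK n v * gradL2 n G - gradL2 n v :=
  stmt0_general n v G hv hG T
end
end

section
/- There exists a constant c_n > 0, depending only on n, such that for every continuously differentiable function v : ℝⁿ → ℂ which vanishes on the boundary ∂K of the cube K = [0,π]ⁿ, one has (∫_K |v(x)|²·|∇(|v|²)(x)|² π^{−n}dx)^{1/2} ≥ c_n·(∫_K |v(x)|² π^{−n}dx)^{3/2}. -/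
open MeasureTheory

noncomputable section

/-!
Write `g = |v|²`. On each segment parallel to the first axis, `g` vanishes at the starting
face, so `g(x)^{3/2} = ∫ (3/2) g^{1/2} ∂₁g` along the segment, and Cauchy–Schwarz gives
`g(x)³ ≤ (9/4) π ∫₀^π g (∂₁g)²`. Integrating over the cube (Fubini) yields
`∫_K g³ ≤ (9/4) π² ∫_K g |∇g|²`, and Jensen's inequality `(⨍_K g)³ ≤ ⨍_K g³` turns this
into the claim with `c_n = 2 / (3π)`.
-/

open Set Real

theorem pow_integral_le_measureReal_pow_mul_integral_pow {α : Type*} [MeasurableSpace α]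
    {μ : Measure α} [IsFiniteMeasure μ] {f : α → ℝ} (hf0 : 0 ≤ᵐ[μ] f)
    (hf : Integrable f μ) (n : ℕ) (hfn : Integrable (fun x => f x ^ (n + 1)) μ) :
    (∫ x, f x ∂μ) ^ (n + 1) ≤ μ.real univ ^ n * ∫ x, f x ^ (n + 1) ∂μ := by
  rcases eq_zero_or_neZero μ with rfl | _
  · simp
  have hμ : 0 < μ.real univ := measureReal_univ_pos
  have hjensen := (convexOn_pow (n + 1)).map_average_le (continuous_pow _).continuousOn
    isClosed_Ici hf0 hf hfn
  rw [average_eq, average_eq, smul_eq_mul, smul_eq_mul, mul_pow] at hjensen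
  calc (∫ x, f x ∂μ) ^ (n + 1)
      = μ.real univ ^ (n + 1) *
          ((μ.real univ)⁻¹ ^ (n + 1) * (∫ x, f x ∂μ) ^ (n + 1)) := by
        rw [← mul_assoc, ← mul_pow, mul_inv_cancel₀ hμ.ne', one_pow, one_mul]
    _ ≤ μ.real univ ^ (n + 1) * ((μ.real univ)⁻¹ * ∫ x, f x ^ (n + 1) ∂μ) := by gcongr
    _ = μ.real univ ^ n * ∫ x, f x ^ (n + 1) ∂μ := by field_simp; ring

theorem pow_three_le_mul_setIntegral_of_hasDerivAt {u u' : ℝ → ℝ} {a b x : ℝ}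
    (hu : ∀ t, HasDerivAt u (u' t) t) (hu' : Continuous u') (hu0 : ∀ t, 0 ≤ u t)
    (ha : u a = 0) (hx : x ∈ Icc a b) :
    u x ^ 3 ≤ 9 / 4 * (b - a) * ∫ t in Icc a b, u t * u' t ^ 2 := by
  have hderiv : ∀ t, HasDerivAt (fun s => u s ^ (3 / 2 : ℝ))
      (u' t * (3 / 2) * u t ^ (1 / 2 : ℝ)) t := fun t => by
    convert (hu t).rpow_const (p := 3 / 2) (Or.inr (by norm_num)) using 3
    norm_num
  set ψ : ℝ → ℝ := fun t => u' t * (3 / 2) * u t ^ (1 / 2 : ℝ)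
  have hψ : Continuous ψ :=
    (hu'.mul continuous_const).mul
      ((continuous_iff_continuousAt.2 fun t => (hu t).continuousAt).rpow_const
        fun _ => Or.inr (by norm_num))
  have hψ_sq : ∀ t, |ψ t| ^ 2 = 9 / 4 * (u t * u' t ^ 2) := fun t => by
    rw [sq_abs, mul_pow, ← rpow_natCast (u t ^ _), ← rpow_mul (hu0 t)]
    norm_num
    ring
  have hFTC : ∫ t in a..x, ψ t = u x ^ (3 / 2 : ℝ) := by
    rw [intervalIntegral.integral_eq_sub_of_hasDerivAt (fun t _ => hderiv t)
      (hψ.intervalIntegrable _ _), ha, zero_rpow (by norm_num), sub_zero]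
  have hab : a ≤ b := hx.1.trans hx.2
  calc u x ^ 3 = (u x ^ (3 / 2 : ℝ)) ^ 2 := by
        rw [← rpow_natCast (u x ^ _), ← rpow_mul (hu0 x)]; norm_num
    _ = |∫ t in a..x, ψ t| ^ 2 := by rw [hFTC, sq_abs]
    _ ≤ (∫ t in Icc a b, |ψ t|) ^ 2 := by
        gcongr
        calc |∫ t in a..x, ψ t| ≤ ∫ t in a..x, |ψ t| :=
              intervalIntegral.abs_integral_le_integral_abs hx.1
          _ = ∫ t in Ioc a x, |ψ t| := intervalIntegral.integral_of_le hx.1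
          _ ≤ ∫ t in Icc a b, |ψ t| :=
              setIntegral_mono_set hψ.abs.integrableOn_Icc (ae_of_all _ fun t => abs_nonneg _)
                (ae_of_all _ (Ioc_subset_Icc_self.trans (Icc_subset_Icc_right hx.2)))
    _ ≤ volume.real (Icc a b) ^ 1 * ∫ t in Icc a b, |ψ t| ^ 2 := by
        simpa only [measureReal_restrict_apply_univ] using
          pow_integral_le_measureReal_pow_mul_integral_pow (μ := volume.restrict (Icc a b))
            (ae_of_all _ fun t => abs_nonneg (ψ t)) hψ.abs.integrableOn_Icc 1
            (hψ.abs.pow 2).integrableOn_Icc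
    _ = 9 / 4 * (b - a) * ∫ t in Icc a b, u t * u' t ^ 2 := by
        simp only [hψ_sq, integral_const_mul, volume_real_Icc_of_le hab, pow_one]
        ring

theorem integral_prod_le_of_ae_le_integral_fst {α β : Type*} [MeasurableSpace α]
    [MeasurableSpace β] {μ : Measure α} {ν : Measure β} [IsFiniteMeasure μ] [SFinite ν]
    {B G : α × β → ℝ} (hB : Integrable B (μ.prod ν)) (hG : Integrable G (μ.prod ν)) {c : ℝ}
    (hbd : ∀ᵐ p ∂μ.prod ν, B p ≤ c * ∫ s, G (s, p.2) ∂μ) :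
    ∫ p, B p ∂μ.prod ν ≤ μ.real univ * c * ∫ p, G p ∂μ.prod ν :=
  calc ∫ p, B p ∂μ.prod ν ≤ ∫ p, c * ∫ s, G (s, p.2) ∂μ ∂μ.prod ν :=
        integral_mono_ae hB ((hG.integral_prod_right.const_mul c).comp_snd μ) hbd
    _ = μ.real univ * c * ∫ y, ∫ s, G (s, y) ∂μ ∂ν := by
        rw [integral_fun_snd (fun y => c * ∫ s, G (s, y) ∂μ), integral_const_mul, smul_eq_mul,
          mul_assoc]
    _ = μ.real univ * c * ∫ p, G p ∂μ.prod ν := by rw [integral_prod_symm _ hG]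

theorem setIntegral_Icc_le_of_le_setIntegral_slice {n : ℕ} (i : Fin (n + 1))
    {a b : Fin (n + 1) → ℝ} {B G : (Fin (n + 1) → ℝ) → ℝ} (hB : IntegrableOn B (Icc a b))
    (hG : IntegrableOn G (Icc a b)) {c : ℝ}
    (hbd : ∀ x ∈ Icc a b, B x ≤ c * ∫ t in Icc (a i) (b i), G (Function.update x i t)) :
    ∫ x in Icc a b, B x ≤ volume.real (Icc (a i) (b i)) * c * ∫ x in Icc a b, G x := by
  set e := (MeasurableEquiv.piFinSuccAbove (fun _ => ℝ) i).symm
  have he : MeasurePreserving e :=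
    (volume_preserving_piFinSuccAbove (fun _ : Fin (n + 1) => ℝ) i).symm _
  have he_apply : ∀ p, e p = i.insertNth p.1 p.2 := fun _ => rfl
  have hpre : e ⁻¹' Icc a b = Icc (a i) (b i) ×ˢ Icc (a ∘ i.succAbove) (b ∘ i.succAbove) :=
    ((Fin.insertNthOrderIso (fun _ => ℝ) i).preimage_Icc _ _).trans (Icc_prod_eq _ _)
  have htransport : ∀ {F : (Fin (n + 1) → ℝ) → ℝ}, IntegrableOn F (Icc a b) →
      Integrable (F ∘ e) ((volume.restrict (Icc (a i) (b i))).prod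
        (volume.restrict (Icc (a ∘ i.succAbove) (b ∘ i.succAbove)))) := fun hF => by
    rw [Measure.prod_restrict, ← Measure.volume_eq_prod, ← hpre, ← IntegrableOn,
      he.integrableOn_comp_preimage e.measurableEmbedding]
    exact hF
  rw [← he.map_eq, setIntegral_map_equiv, setIntegral_map_equiv, hpre, Measure.volume_eq_prod,
    ← Measure.prod_restrict, ← measureReal_restrict_apply_univ]
  refine integral_prod_le_of_ae_le_integral_fst (htransport hB) (htransport hG) ?_
  rw [Measure.prod_restrict]
  refine ae_restrict_of_forall_mem (measurableSet_Icc.prod measurableSet_Icc) fun p hp => ?_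
  have := hbd (e p) (by rw [← mem_preimage, hpre]; exact hp)
  simpa only [Function.comp_apply, he_apply, Fin.update_insertNth] using this

theorem setIntegral_Icc_pow_three_le {n : ℕ} (i : Fin (n + 1)) {a b : Fin (n + 1) → ℝ}
    (hab : a ≤ b) {g : (Fin (n + 1) → ℝ) → ℝ} (hg : ContDiff ℝ 1 g) (hg0 : ∀ x, 0 ≤ g x)
    (hface : ∀ x ∈ Icc a b, x i = a i → g x = 0) :
    ∫ x in Icc a b, g x ^ 3 ≤
      9 / 4 * (b i - a i) ^ 2 * ∫ x in Icc a b, g x * fderiv ℝ g x (Pi.single i 1) ^ 2 := by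
  have hdg : Continuous fun x => fderiv ℝ g x (Pi.single i 1) :=
    (hg.continuous_fderiv one_ne_zero).clm_apply continuous_const
  have hslice := setIntegral_Icc_le_of_le_setIntegral_slice i (B := fun x => g x ^ 3)
    (G := fun x => g x * fderiv ℝ g x (Pi.single i 1) ^ 2)
    (hg.continuous.pow 3).integrableOn_Icc (hg.continuous.mul (hdg.pow 2)).integrableOn_Icc
    (c := 9 / 4 * (b i - a i)) fun x hx => by
      have hpath : Continuous fun t => Function.update x i t :=
        continuous_const.update i continuous_id
      have hu0 : g (Function.update x i (a i)) = 0 := by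
        refine hface _ ⟨?_, ?_⟩ (Function.update_self ..)
        · exact le_update_iff.2 ⟨le_rfl, fun j _ => hx.1 j⟩
        · exact update_le_iff.2 ⟨hab i, fun j _ => hx.2 j⟩
      simpa only [Function.update_eq_self] using
        pow_three_le_mul_setIntegral_of_hasDerivAt (u := fun t => g (Function.update x i t))
          (fun t => (hg.differentiable one_ne_zero _).hasFDerivAt.comp_hasDerivAt t
            (hasDerivAt_update x i t)) (hdg.comp hpath) (fun t => hg0 _) hu0 ⟨hx.1 i, hx.2 i⟩
  rw [volume_real_Icc_of_le (hab i)] at hslice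
  linarith

theorem pow_three_setIntegral_Icc_le {n : ℕ} (i : Fin (n + 1)) {a b : Fin (n + 1) → ℝ}
    (hab : a ≤ b) {g : (Fin (n + 1) → ℝ) → ℝ} (hg : ContDiff ℝ 1 g) (hg0 : ∀ x, 0 ≤ g x)
    (hface : ∀ x ∈ Icc a b, x i = a i → g x = 0) :
    (∫ x in Icc a b, g x) ^ 3 ≤ volume.real (Icc a b) ^ 2 * ((3 / 2 * (b i - a i)) ^ 2 *
      ∫ x in Icc a b, g x * ∑ j, fderiv ℝ g x (Pi.single j 1) ^ 2) := by
  have hdg : ∀ j, Continuous fun x => fderiv ℝ g x (Pi.single j 1) := fun j =>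
    (hg.continuous_fderiv one_ne_zero).clm_apply continuous_const
  have : IsFiniteMeasure (volume.restrict (Icc a b)) :=
    isFiniteMeasure_restrict.2 isCompact_Icc.measure_lt_top.ne
  have hjensen := pow_integral_le_measureReal_pow_mul_integral_pow
    (μ := volume.restrict (Icc a b)) (ae_of_all _ hg0) hg.continuous.integrableOn_Icc 2
    (hg.continuous.pow 3).integrableOn_Icc
  have hgrad : ∫ x in Icc a b, g x * fderiv ℝ g x (Pi.single i 1) ^ 2 ≤
      ∫ x in Icc a b, g x * ∑ j, fderiv ℝ g x (Pi.single j 1) ^ 2 :=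
    setIntegral_mono_on (hg.continuous.mul ((hdg i).pow 2)).integrableOn_Icc
      (hg.continuous.mul (continuous_finsetSum _ fun j _ => (hdg j).pow 2)).integrableOn_Icc
      measurableSet_Icc fun x _ => mul_le_mul_of_nonneg_left
        (Finset.single_le_sum (f := fun j => fderiv ℝ g x (Pi.single j 1) ^ 2)
          (fun j _ => sq_nonneg _) (Finset.mem_univ i)) (hg0 x)
  rw [measureReal_restrict_apply_univ] at hjensen
  refine hjensen.trans (mul_le_mul_of_nonneg_left ?_ (by positivity))
  calc ∫ x in Icc a b, g x ^ 3
      ≤ 9 / 4 * (b i - a i) ^ 2 * ∫ x in Icc a b, g x * fderiv ℝ g x (Pi.single i 1) ^ 2 :=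
        setIntegral_Icc_pow_three_le i hab hg hg0 hface
    _ ≤ (3 / 2 * (b i - a i)) ^ 2 *
          ∫ x in Icc a b, g x * ∑ j, fderiv ℝ g x (Pi.single j 1) ^ 2 := by
        rw [mul_pow]; norm_num; gcongr

theorem mem_frontier_Icc_of_apply_eq {ι : Type*} [Finite ι] {a b x : ι → ℝ}
    (hx : x ∈ Icc a b) {i : ι} (hxi : x i = a i) : x ∈ frontier (Icc a b) := by
  rw [isClosed_Icc.frontier_eq]
  refine ⟨hx, fun hint => ?_⟩
  rw [← pi_univ_Icc, interior_pi_set finite_univ] at hint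
  simpa [hxi] using hint i (mem_univ i)

theorem inv_mul_rpow_three_halves_le_sqrt {T k A S : ℝ} (hT : 0 < T) (hk : 0 < k)
    (hA : 0 ≤ A) (h : A ^ 3 ≤ T ^ 2 * (k ^ 2 * S)) :
    k⁻¹ * (T⁻¹ * A) ^ (3 / 2 : ℝ) ≤ √(T⁻¹ * S) := by
  have hS : 0 ≤ S := nonneg_of_mul_nonneg_right
    (nonneg_of_mul_nonneg_right ((pow_nonneg hA 3).trans h) (by positivity)) (by positivity)
  rw [show (T⁻¹ * A) ^ (3 / 2 : ℝ) = √((T⁻¹ * A) ^ 3) by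
    rw [sqrt_eq_rpow, ← rpow_natCast, ← rpow_mul (by positivity)]; norm_num]
  rw [le_sqrt (by positivity) (by positivity), mul_pow, sq_sqrt (by positivity)]
  calc k⁻¹ ^ 2 * (T⁻¹ * A) ^ 3 = (k ^ 2 * T ^ 3)⁻¹ * A ^ 3 := by ring
    _ ≤ (k ^ 2 * T ^ 3)⁻¹ * (T ^ 2 * (k ^ 2 * S)) := by gcongr
    _ = T⁻¹ * S := by field_simp

/-- there is `c_n > 0` such that every `C¹` function `v : ℝⁿ → ℂ`
vanishing on `∂K` satisfies
`(∫_K |v|² |∇(|v|²)|² π^{-n}dx)^{1/2} ≥ c_n (∫_K |v|² π^{-n}dx)^{3/2}`. -/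
theorem stmt1 (n : ℕ) (hn : 1 ≤ n) :
    ∃ c : ℝ, 0 < c ∧
      ∀ v : (Fin n → ℝ) → ℂ, ContDiff ℝ 1 v →
        (∀ x ∈ frontier (cubeK n), v x = 0) →
        Real.sqrt ((Real.pi ^ n)⁻¹ * ∫ x in cubeK n,
            ‖v x‖ ^ 2 * ∑ j : Fin n,
              (fderiv ℝ (fun y => ‖v y‖ ^ 2) x (Pi.single j 1)) ^ 2) ≥
          c * ((Real.pi ^ n)⁻¹ * ∫ x in cubeK n, ‖v x‖ ^ 2) ^ ((3 : ℝ) / 2) := by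
  obtain ⟨m, rfl⟩ : ∃ m, n = m + 1 := ⟨n - 1, by omega⟩
  refine ⟨(3 / 2 * π)⁻¹, by positivity, fun v hv hv0 => ?_⟩
  have hπ : (0 : Fin (m + 1) → ℝ) ≤ fun _ => π := fun _ => pi_pos.le
  have hvol : volume.real (Icc (0 : Fin (m + 1) → ℝ) fun _ => π) = π ^ (m + 1) := by
    simp [measureReal_def, Real.volume_Icc_pi_toReal hπ]
  have hA : 0 ≤ ∫ x in cubeK (m + 1), ‖v x‖ ^ 2 :=
    setIntegral_nonneg measurableSet_Icc fun x _ => sq_nonneg ‖v x‖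
  have hcube := pow_three_setIntegral_Icc_le 0 hπ (hv.norm_sq ℝ) (fun x => sq_nonneg ‖v x‖)
    fun x hx hx0 => by simp [hv0 x (mem_frontier_Icc_of_apply_eq hx hx0)]
  simp only [hvol, Pi.zero_apply, sub_zero] at hcube
  exact inv_mul_rpow_three_halves_le_sqrt (by positivity) (by positivity) hA hcube
end
end

section
/- Let m ≥ 1 be an integer, c > 0, B > 0, T > 0, and let g : [0,T] → ℝ be differentiable with g(t) ≥ 0 for all t and g'(t) ≤ −c·g(t)^{(m+1)/m} + B for all t ∈ [0,T]. Then for every t ∈ (0,T] one has g(t) ≤ (2B/c)^{m/(m+1)} + (2m/(c·t))^m. -/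
noncomputable section

open Set Real

/-- if `m ≥ 1`, `c, B, T > 0` and `g : [0,T] → ℝ` is differentiable,
nonnegative, with `g'(t) ≤ -c g(t)^{(m+1)/m} + B` on `[0,T]`, then for every
`t ∈ (0,T]` one has `g(t) ≤ (2B/c)^{m/(m+1)} + (2m/(ct))^m`. -/
theorem stmt12 (m : ℕ) (hm : 1 ≤ m) (c B T : ℝ) (hc : 0 < c) (hB : 0 < B) (hT : 0 < T)
    (g g' : ℝ → ℝ)
    (hg : ∀ t ∈ Set.Icc (0 : ℝ) T, HasDerivWithinAt g (g' t) (Set.Icc (0 : ℝ) T) t)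
    (hpos : ∀ t ∈ Set.Icc (0 : ℝ) T, 0 ≤ g t)
    (hineq : ∀ t ∈ Set.Icc (0 : ℝ) T,
      g' t ≤ -c * g t ^ (((m : ℝ) + 1) / (m : ℝ)) + B) :
    ∀ t ∈ Set.Ioc (0 : ℝ) T,
      g t ≤ (2 * B / c) ^ ((m : ℝ) / ((m : ℝ) + 1)) + (2 * (m : ℝ) / (c * t)) ^ m := by
  rintro t ⟨ht0, htT⟩
  have hm0 : (0 : ℝ) < (m : ℝ) := by exact_mod_cast Nat.pos_of_ne_zero (by omega)
  have hm1 : (0 : ℝ) < (m : ℝ) + 1 := by positivity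
  set p : ℝ := ((m : ℝ) + 1) / (m : ℝ) with hp_def
  have hp1 : (1 : ℝ) < p := by
    rw [hp_def, lt_div_iff₀ hm0]; linarith
  have hp0 : (0 : ℝ) < p := by linarith
  have hbc : (0 : ℝ) < 2 * B / c := by positivity
  set K : ℝ := (2 * B / c) ^ ((m : ℝ) / ((m : ℝ) + 1)) with hK_def
  have hK0 : 0 < K := rpow_pos_of_pos hbc _
  have hKp : c * K ^ p = 2 * B := by
    rw [hK_def, ← Real.rpow_mul hbc.le]
    have h1 : (m : ℝ) / ((m : ℝ) + 1) * p = 1 := by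
      rw [hp_def]; field_simp
    rw [h1, Real.rpow_one]; field_simp
  have hDpos : (0 : ℝ) < 2 * (m : ℝ) / c := by positivity
  set D : ℝ := (2 * (m : ℝ) / c) ^ ((m : ℝ)) with hD_def
  have hD0 : 0 < D := rpow_pos_of_pos hDpos _
  -- barrier function
  set Bf : ℝ → ℝ := fun x => K + D * x ^ (-(m : ℝ)) with hBf_def
  set Bf' : ℝ → ℝ := fun x => D * (-(m : ℝ) * x ^ (-(m : ℝ) - 1)) with hBf'_def
  have hBderiv : ∀ x : ℝ, 0 < x → HasDerivAt Bf (Bf' x) x := by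
    intro x hx
    have h := (Real.hasDerivAt_rpow_const (p := -(m : ℝ)) (Or.inl hx.ne'))
    exact (h.const_mul D).const_add K
  -- key computation : c/2 * (D * x ^ (-m)) ^ p = m * D * x ^ (-m - 1)
  have hhp : ∀ x : ℝ, 0 < x →
      c / 2 * (D * x ^ (-(m : ℝ))) ^ p = (m : ℝ) * D * x ^ (-(m : ℝ) - 1) := by
    intro x hx
    have hxm : (0:ℝ) ≤ x ^ (-(m:ℝ)) := (rpow_pos_of_pos hx _).le
    have hDp : D ^ p = D * (2 * (m:ℝ) / c) := by
      rw [hD_def, ← Real.rpow_mul hDpos.le]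
      have h1 : (m : ℝ) * p = (m : ℝ) + 1 := by rw [hp_def]; field_simp
      rw [h1, Real.rpow_add hDpos, Real.rpow_one]
    have hxpp : (x ^ (-(m:ℝ))) ^ p = x ^ (-(m:ℝ) - 1) := by
      rw [← Real.rpow_mul hx.le]
      congr 1
      rw [hp_def]; field_simp; ring
    rw [Real.mul_rpow hD0.le hxm, hDp, hxpp]
    field_simp
  -- bound of g
  obtain ⟨x0, hx0mem, hx0max⟩ :=
    (isCompact_Icc (a := (0:ℝ)) (b := T)).exists_isMaxOn ⟨0, by constructor <;> [rfl; exact hT.le]⟩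
    (fun x hx => ((hg x hx).continuousWithinAt))
  set M : ℝ := g x0 with hM_def
  have hM0 : 0 ≤ M := hpos x0 hx0mem
  have hgleM : ∀ x ∈ Icc (0:ℝ) T, g x ≤ M := fun x hx => hx0max hx
  -- choose a
  set r : ℝ := (D / (M + 1)) ^ (1 / (m : ℝ)) with hr_def
  have hr0 : 0 < r := rpow_pos_of_pos (by positivity) _
  set a : ℝ := min (t / 2) r with ha_def
  have ha0 : 0 < a := lt_min (by linarith) hr0
  have hat : a < t := lt_of_le_of_lt (min_le_left _ _) (by linarith)
  have haT : a ≤ T := le_trans hat.le htT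
  -- at a : D * a ^ (-m) ≥ M + 1
  have haM : M + 1 ≤ D * a ^ (-(m : ℝ)) := by
    have har : a ≤ r := min_le_right _ _
    have h1 : a ^ (m : ℝ) ≤ r ^ (m : ℝ) := rpow_le_rpow ha0.le har hm0.le
    have h2 : r ^ (m : ℝ) = D / (M + 1) := by
      rw [hr_def, ← Real.rpow_mul (by positivity), one_div,
        inv_mul_cancel₀ hm0.ne', Real.rpow_one]
    have h3 : a ^ (m : ℝ) ≤ D / (M + 1) := h2 ▸ h1
    have h4 : 0 < a ^ (m : ℝ) := rpow_pos_of_pos ha0 _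
    rw [Real.rpow_neg ha0.le, ← div_eq_mul_inv, le_div_iff₀ h4]
    rw [le_div_iff₀ (by positivity : (0:ℝ) < M + 1)] at h3
    linarith
  have hga : g a ≤ Bf a := by
    have : g a ≤ M := hgleM a ⟨ha0.le, haT⟩
    have : g a ≤ M + 1 := by linarith
    calc g a ≤ M + 1 := this
      _ ≤ D * a ^ (-(m:ℝ)) := haM
      _ ≤ Bf a := by rw [hBf_def]; simp only; linarith
  -- apply the comparison theorem on [a, T]
  have key : ∀ x ∈ Icc a T, g x ≤ Bf x := by
    intro x hx
    refine image_le_of_deriv_right_lt_deriv_boundary' (f := g) (f' := g') (B := Bf) (B' := Bf')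
      (a := a) (b := T) ?_ ?_ hga ?_ ?_ ?_ hx
    · exact (fun y hy => ((hg y ⟨le_trans ha0.le hy.1, hy.2⟩).continuousWithinAt).mono
        (fun z hz => ⟨le_trans ha0.le hz.1, hz.2⟩))
    · intro y hy
      have hy' : y ∈ Icc (0:ℝ) T := ⟨le_trans ha0.le hy.1, hy.2.le⟩
      refine (hg y hy').mono_of_mem_nhdsWithin ?_
      have : Ici y ∩ Iic T ⊆ Icc (0:ℝ) T := fun z hz =>
        ⟨le_trans (le_trans ha0.le hy.1) hz.1, hz.2⟩
      exact Filter.mem_of_superset (inter_mem_nhdsWithin _ (Iic_mem_nhds hy.2)) this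
    · exact fun y hy => ((hBderiv y (lt_of_lt_of_le ha0 hy.1)).continuousAt).continuousWithinAt
    · exact fun y hy => (hBderiv y (lt_of_lt_of_le ha0 hy.1)).hasDerivWithinAt
    · intro y hy hgy
      have hy0 : 0 < y := lt_of_lt_of_le ha0 hy.1
      have hy' : y ∈ Icc (0:ℝ) T := ⟨hy0.le, hy.2.le⟩
      have h1 : g' y ≤ -c * g y ^ p + B := hineq y hy'
      set hx := D * y ^ (-(m:ℝ)) with hhx_def
      have hhx0 : 0 < hx := by positivity
      have hgy' : g y = K + hx := hgy
      -- strict: c * (K + hx)^p > B + m * D * y^(-m-1)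
      have hstrict : B + (m:ℝ) * D * y ^ (-(m:ℝ)-1) < c * (K + hx) ^ p := by
        have e1 : K ^ p < (K + hx) ^ p := rpow_lt_rpow hK0.le (by linarith) hp0
        have e2 : hx ^ p < (K + hx) ^ p := rpow_lt_rpow hhx0.le (by linarith) hp0
        have e3 : c / 2 * hx ^ p = (m:ℝ) * D * y ^ (-(m:ℝ)-1) := hhp y hy0
        nlinarith [rpow_pos_of_pos (show (0:ℝ) < K + hx by linarith) p]
      have hBf'y : Bf' y = -((m:ℝ) * D * y ^ (-(m:ℝ)-1)) := by rw [hBf'_def]; ring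
      rw [hgy'] at h1
      rw [hBf'y]
      linarith
  -- conclude
  have hfinal := key t ⟨hat.le, htT⟩
  have heq : Bf t = K + (2 * (m:ℝ) / (c * t)) ^ m := by
    rw [hBf_def]
    simp only
    congr 1
    rw [hD_def, Real.rpow_natCast, Real.rpow_neg ht0.le, Real.rpow_natCast,
      ← inv_pow, ← mul_pow]
    congr 1
    field_simp
  rw [heq] at hfinal
  exact hfinal
end
end
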